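/- Suppose V ∈ C¹(Ω̄; ℂ), A ∈ C²(Ω̄; ℝ^d), and as |x| → ∞: |∇V(x)| + |∇B(x)| = o(m_{B,V}(x)^{3/2}) and (Re V(x))_− = o(m_{B,V}(x)), where m_{B,V} = √(1+|B|²+|V|²). Then there exist constants γ₁ > 0 and γ₂ ∈ ℝ such that for all x ∈ Ω: (V₂(x)² + (1/(12d))|B(x)|²)/m_{B,V}(x) + V₁(x) − 9(|∇Φ(x)|² + |∇Ψ(x)|²) ≥ γ₁|V(x)| − γ₂, where V = V₁ + iV₂, Φ = V₂/m_{B,V}, Ψ = B/m_{B,V}. -/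

import Mathlib

open MeasureTheory Complex

noncomputable section

/-- The magnetic momentum operator `P_j = -i∂_j + A_j`. -/
def magD {d : ℕ} (A : (Fin d → ℝ) → (Fin d → ℝ)) (j : Fin d)
    (u : (Fin d → ℝ) → ℂ) (x : Fin d → ℝ) : ℂ :=
  -Complex.I * fderiv ℝ u x (Pi.single j 1) + (A x j : ℂ) * u x

/-- Partial derivative of a real-valued function. -/
def pdR {d : ℕ} (j : Fin d) (f : (Fin d → ℝ) → ℝ) (x : Fin d → ℝ) : ℝ :=
  fderiv ℝ f x (Pi.single j 1)

/-- The magnetic matrix `B_{jk} = ∂_j A_k − ∂_k A_j`. -/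
def Bmat {d : ℕ} (A : (Fin d → ℝ) → (Fin d → ℝ)) (j k : Fin d)
    (x : Fin d → ℝ) : ℝ :=
  pdR j (fun y => A y k) x - pdR k (fun y => A y j) x

/-- `|B(x)|² = ∑_{j,k} B_{jk}(x)²`. -/
def normBsq {d : ℕ} (A : (Fin d → ℝ) → (Fin d → ℝ)) (x : Fin d → ℝ) : ℝ :=
  ∑ j, ∑ k, (Bmat A j k x) ^ 2

/-- `m_{B,V} = √(1 + |B|² + |V|²)`. -/
def mBV {d : ℕ} (A : (Fin d → ℝ) → (Fin d → ℝ)) (V : (Fin d → ℝ) → ℂ)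
    (x : Fin d → ℝ) : ℝ :=
  Real.sqrt (1 + normBsq A x + ‖V x‖ ^ 2)

/-- `Φ = V₂ / m_{B,V}`. -/
def PhiW {d : ℕ} (A : (Fin d → ℝ) → (Fin d → ℝ)) (V : (Fin d → ℝ) → ℂ)
    (x : Fin d → ℝ) : ℝ :=
  (V x).im / mBV A V x

/-- `|∇Φ|²`. -/
def gradPhiSq {d : ℕ} (A : (Fin d → ℝ) → (Fin d → ℝ)) (V : (Fin d → ℝ) → ℂ)
    (x : Fin d → ℝ) : ℝ :=
  ‖fderiv ℝ (PhiW A V) x‖ ^ 2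

/-- `|∇Ψ|² = ∑_{j,k} |∇(B_{jk}/m_{B,V})|²`. -/
def gradPsiSq {d : ℕ} (A : (Fin d → ℝ) → (Fin d → ℝ)) (V : (Fin d → ℝ) → ℂ)
    (x : Fin d → ℝ) : ℝ :=
  ∑ j, ∑ k, ‖fderiv ℝ (fun y => Bmat A j k y / mBV A V y) x‖ ^ 2

/-- `|∇B|² = ∑_{j,k} |∇B_{jk}|²`. -/
def gradBnormSq {d : ℕ} (A : (Fin d → ℝ) → (Fin d → ℝ)) (x : Fin d → ℝ) : ℝ :=
  ∑ j, ∑ k, ‖fderiv ℝ (Bmat A j k) x‖ ^ 2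

/-- A test function: smooth with compact support contained in `Ω`. -/
def IsTest {d : ℕ} (Ω : Set (Fin d → ℝ)) (u : (Fin d → ℝ) → ℂ) : Prop :=
  ContDiff ℝ (⊤ : ℕ∞) u ∧ HasCompactSupport u ∧ tsupport u ⊆ Ω



section Aux
variable {d : ℕ} {A : (Fin d → ℝ) → (Fin d → ℝ)} {V : (Fin d → ℝ) → ℂ}
def gBV (A : (Fin d → ℝ) → (Fin d → ℝ)) (V : (Fin d → ℝ) → ℂ) (x : Fin d → ℝ) : ℝ :=
  1 + (∑ j, ∑ k, Bmat A j k x * Bmat A j k x) + ((V x).re * (V x).re + (V x).im * (V x).im)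
lemma norm_sq_complex (z : ℂ) : ‖z‖ ^ 2 = z.re * z.re + z.im * z.im := by
  rw [Complex.sq_norm, Complex.normSq_apply]
lemma mBV_eq (x : Fin d → ℝ) : mBV A V x = Real.sqrt (gBV A V x) := by
  unfold mBV gBV normBsq
  rw [norm_sq_complex]
  simp only [pow_two]
lemma gBV_ge_one (x : Fin d → ℝ) : 1 ≤ gBV A V x := by
  unfold gBV
  have h1 : (0:ℝ) ≤ ∑ j, ∑ k, Bmat A j k x * Bmat A j k x :=
    Finset.sum_nonneg fun j _ => Finset.sum_nonneg fun k _ => mul_self_nonneg _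
  nlinarith [mul_self_nonneg (V x).re, mul_self_nonneg (V x).im]
lemma mBV_ge_one (x : Fin d → ℝ) : 1 ≤ mBV A V x := by
  rw [mBV_eq]
  calc (1:ℝ) = Real.sqrt 1 := (Real.sqrt_one).symm
  _ ≤ _ := Real.sqrt_le_sqrt (gBV_ge_one x)
lemma mBV_pos (x : Fin d → ℝ) : 0 < mBV A V x := lt_of_lt_of_le one_pos (mBV_ge_one x)
lemma mBV_ne (x : Fin d → ℝ) : mBV A V x ≠ 0 := (mBV_pos x).ne'
lemma sq_mBV (x : Fin d → ℝ) : (mBV A V x) ^ 2 = gBV A V x := by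
  rw [mBV_eq]; exact Real.sq_sqrt (le_trans zero_le_one (gBV_ge_one x))
lemma contDiff_pd (hA : ContDiff ℝ 2 A) (j k : Fin d) :
    ContDiff ℝ 1 (fun y => pdR j (fun z => A z k) y) := by
  have hAk : ContDiff ℝ 2 (fun z => A z k) :=
    (ContinuousLinearMap.proj (R := ℝ) (φ := fun _ : Fin d => ℝ) k).contDiff.comp hA
  have hf : ContDiff ℝ 1 (fderiv ℝ (fun z => A z k)) := hAk.fderiv_right (by norm_num)
  exact hf.clm_apply contDiff_const
lemma contDiff_Bmat (hA : ContDiff ℝ 2 A) (j k : Fin d) :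
    ContDiff ℝ 1 (Bmat A j k) :=
  (contDiff_pd hA j k).sub (contDiff_pd hA k j)
lemma contDiff_gBV (hA : ContDiff ℝ 2 A) (hV : ContDiff ℝ 1 V) :
    ContDiff ℝ 1 (gBV A V) := by
  have hre : ContDiff ℝ 1 (fun x => (V x).re) := Complex.reCLM.contDiff.comp hV
  have him : ContDiff ℝ 1 (fun x => (V x).im) := Complex.imCLM.contDiff.comp hV
  have hsum : ContDiff ℝ 1 (fun x => ∑ j, ∑ k, Bmat A j k x * Bmat A j k x) :=
    ContDiff.sum fun j _ => ContDiff.sum fun k _ =>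
      (contDiff_Bmat hA j k).mul (contDiff_Bmat hA j k)
  exact (contDiff_const.add hsum).add ((hre.mul hre).add (him.mul him))
lemma contDiff_mBV (hA : ContDiff ℝ 2 A) (hV : ContDiff ℝ 1 V) :
    ContDiff ℝ 1 (mBV A V) := by
  have h : mBV A V = fun x => Real.sqrt (gBV A V x) := funext mBV_eq
  rw [h, contDiff_iff_contDiffAt]
  intro x
  exact ((contDiff_gBV hA hV).contDiffAt).sqrt
    (by have := gBV_ge_one (A := A) (V := V) x; positivity)
lemma contDiff_normBsq (hA : ContDiff ℝ 2 A) : ContDiff ℝ 1 (normBsq A) :=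
  ContDiff.sum fun j _ => ContDiff.sum fun k _ => (contDiff_Bmat hA j k).pow 2
lemma contDiff_quot (hA : ContDiff ℝ 2 A) (hV : ContDiff ℝ 1 V)
    {f : (Fin d → ℝ) → ℝ} (hf : ContDiff ℝ 1 f) :
    ContDiff ℝ 1 (fun y => f y / mBV A V y) :=
  hf.div (contDiff_mBV hA hV) fun x => mBV_ne x

-- pointwise bounds
lemma abs_Bmat_le (x : Fin d → ℝ) (j k : Fin d) : |Bmat A j k x| ≤ mBV A V x := by
  rw [mBV_eq, ← Real.sqrt_sq_eq_abs]
  apply Real.sqrt_le_sqrt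
  have h1 : Bmat A j k x ^ 2 ≤ ∑ j', ∑ k', Bmat A j' k' x * Bmat A j' k' x := by
    rw [pow_two]
    calc Bmat A j k x * Bmat A j k x
        ≤ ∑ k', Bmat A j k' x * Bmat A j k' x :=
          Finset.single_le_sum (f := fun k' => Bmat A j k' x * Bmat A j k' x)
            (fun i _ => mul_self_nonneg _) (Finset.mem_univ k)
      _ ≤ _ := Finset.single_le_sum (f := fun j' => ∑ k', Bmat A j' k' x * Bmat A j' k' x)
            (fun i _ => Finset.sum_nonneg fun _ _ => mul_self_nonneg _) (Finset.mem_univ j)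
  unfold gBV
  nlinarith [mul_self_nonneg (V x).re, mul_self_nonneg (V x).im]

lemma norm_V_le (x : Fin d → ℝ) : ‖V x‖ ≤ mBV A V x := by
  rw [mBV_eq, ← Real.sqrt_sq (norm_nonneg (V x))]
  apply Real.sqrt_le_sqrt
  rw [norm_sq_complex]
  unfold gBV
  have h1 : (0:ℝ) ≤ ∑ j, ∑ k, Bmat A j k x * Bmat A j k x :=
    Finset.sum_nonneg fun j _ => Finset.sum_nonneg fun k _ => mul_self_nonneg _
  linarith

lemma fderiv_Bmat_le (x : Fin d → ℝ) (j k : Fin d) :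
    ‖fderiv ℝ (Bmat A j k) x‖ ≤ Real.sqrt (gradBnormSq A x) := by
  apply Real.le_sqrt_of_sq_le
  unfold gradBnormSq
  calc ‖fderiv ℝ (Bmat A j k) x‖ ^ 2
      ≤ ∑ k', ‖fderiv ℝ (Bmat A j k') x‖ ^ 2 :=
        Finset.single_le_sum (f := fun k' => ‖fderiv ℝ (Bmat A j k') x‖ ^ 2)
          (fun i _ => sq_nonneg _) (Finset.mem_univ k)
    _ ≤ _ := Finset.single_le_sum (f := fun j' => ∑ k', ‖fderiv ℝ (Bmat A j' k') x‖ ^ 2)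
          (fun i _ => Finset.sum_nonneg fun _ _ => sq_nonneg _) (Finset.mem_univ j)

end Aux

section Aux2
variable {d : ℕ} {A : (Fin d → ℝ) → (Fin d → ℝ)} {V : (Fin d → ℝ) → ℂ}

lemma norm_smul_clm {d : ℕ} (b : ℝ) (L : (Fin d → ℝ) →L[ℝ] ℝ) : ‖b • L‖ = |b| * ‖L‖ := by
  rw [← Real.norm_eq_abs]; exact norm_smul b L

lemma grad_bound (hA : ContDiff ℝ 2 A) (hV : ContDiff ℝ 1 V) (x : Fin d → ℝ) :
    gradPhiSq A V x + gradPsiSq A V x ≤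
      ((d:ℝ)^2 + 1) * (((d:ℝ)^2 + 3) *
        (‖fderiv ℝ V x‖ + Real.sqrt (gradBnormSq A x)) / mBV A V x) ^ 2 := by
  have hm1 : 1 ≤ mBV A V x := mBV_ge_one x
  have hm0 : 0 < mBV A V x := mBV_pos x
  have hN0 : 0 ≤ ‖fderiv ℝ V x‖ + Real.sqrt (gradBnormSq A x) :=
    add_nonneg (norm_nonneg _) (Real.sqrt_nonneg _)
  have hVd : HasFDerivAt V (fderiv ℝ V x) x := ((hV.differentiable one_ne_zero) x).hasFDerivAt
  have hBd : ∀ j k : Fin d, HasFDerivAt (Bmat A j k) (fderiv ℝ (Bmat A j k) x) x :=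
    fun j k => (((contDiff_Bmat hA j k).differentiable one_ne_zero) x).hasFDerivAt
  have hBd_norm : ∀ j k : Fin d,
      ‖fderiv ℝ (Bmat A j k) x‖ ≤ ‖fderiv ℝ V x‖ + Real.sqrt (gradBnormSq A x) := fun j k =>
    le_trans (fderiv_Bmat_le x j k) (le_add_of_nonneg_left (norm_nonneg _))
  have hBabs : ∀ j k : Fin d, |Bmat A j k x| ≤ mBV A V x := fun j k => abs_Bmat_le x j k
  have him : HasFDerivAt (fun y => (V y).im) (Complex.imCLM.comp (fderiv ℝ V x)) x :=
    (Complex.imCLM.hasFDerivAt).comp x hVd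
  have him_norm : ‖Complex.imCLM.comp (fderiv ℝ V x)‖
      ≤ ‖fderiv ℝ V x‖ + Real.sqrt (gradBnormSq A x) := by
    refine le_trans (ContinuousLinearMap.opNorm_comp_le _ _) ?_
    rw [Complex.imCLM_norm, one_mul]
    exact le_add_of_nonneg_right (Real.sqrt_nonneg _)
  have him_abs : |(V x).im| ≤ mBV A V x :=
    le_trans (Complex.abs_im_le_norm (V x)) (norm_V_le x)
  -- abbreviations (plain reals, no lets)
  generalize hmN : ‖fderiv ℝ V x‖ + Real.sqrt (gradBnormSq A x) = N at *
  -- derivative of gBV with norm bound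
  obtain ⟨G, hg, hGn⟩ : ∃ G : (Fin d → ℝ) →L[ℝ] ℝ, HasFDerivAt (gBV A V) G x ∧
      ‖G‖ ≤ (2*(d:ℝ)^2 + 4) * mBV A V x * N := by
    have hre : HasFDerivAt (fun y => (V y).re) (Complex.reCLM.comp (fderiv ℝ V x)) x :=
      (Complex.reCLM.hasFDerivAt).comp x hVd
    have hre_norm : ‖Complex.reCLM.comp (fderiv ℝ V x)‖ ≤ N := by
      rw [← hmN]
      refine le_trans (ContinuousLinearMap.opNorm_comp_le _ _) ?_
      rw [Complex.reCLM_norm, one_mul]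
      exact le_add_of_nonneg_right (Real.sqrt_nonneg _)
    have hre_abs : |(V x).re| ≤ mBV A V x :=
      le_trans (Complex.abs_re_le_norm (V x)) (norm_V_le x)
    have hS : HasFDerivAt (fun y => ∑ j, ∑ k, Bmat A j k y * Bmat A j k y)
        (∑ j, ∑ k, (Bmat A j k x • fderiv ℝ (Bmat A j k) x
          + Bmat A j k x • fderiv ℝ (Bmat A j k) x)) x :=
      HasFDerivAt.fun_sum fun j _ => HasFDerivAt.fun_sum fun k _ => (hBd j k).mul (hBd j k)
    have hT : HasFDerivAt (fun y => (V y).re * (V y).re + (V y).im * (V y).im)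
        (((V x).re • (Complex.reCLM.comp (fderiv ℝ V x))
            + (V x).re • (Complex.reCLM.comp (fderiv ℝ V x)))
          + ((V x).im • (Complex.imCLM.comp (fderiv ℝ V x))
            + (V x).im • (Complex.imCLM.comp (fderiv ℝ V x)))) x :=
      (hre.mul hre).add (him.mul him)
    refine ⟨_, ((hasFDerivAt_const (1:ℝ) x).add hS).add hT, ?_⟩
    have hterm : ∀ j k : Fin d, ‖Bmat A j k x • fderiv ℝ (Bmat A j k) x
        + Bmat A j k x • fderiv ℝ (Bmat A j k) x‖ ≤ 2 * (mBV A V x * N) := by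
      intro j k
      refine le_trans (norm_add_le _ _) ?_
      rw [norm_smul_clm]
      have h1 : |Bmat A j k x| * ‖fderiv ℝ (Bmat A j k) x‖ ≤ mBV A V x * N :=
        mul_le_mul (hBabs j k) (hBd_norm j k) (norm_nonneg _) (le_of_lt hm0)
      linarith
    have hS_norm : ‖∑ j, ∑ k, (Bmat A j k x • fderiv ℝ (Bmat A j k) x
        + Bmat A j k x • fderiv ℝ (Bmat A j k) x)‖ ≤ (d:ℝ)^2 * (2 * (mBV A V x * N)) := by
      refine le_trans (norm_sum_le _ _) ?_
      have hjk : ∀ j : Fin d, ‖∑ k, (Bmat A j k x • fderiv ℝ (Bmat A j k) x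
          + Bmat A j k x • fderiv ℝ (Bmat A j k) x)‖ ≤ (d:ℝ) * (2 * (mBV A V x * N)) := by
        intro j
        refine le_trans (norm_sum_le _ _) ?_
        calc ∑ k, ‖Bmat A j k x • fderiv ℝ (Bmat A j k) x
              + Bmat A j k x • fderiv ℝ (Bmat A j k) x‖
            ≤ ∑ _k : Fin d, (2 * (mBV A V x * N)) := Finset.sum_le_sum fun k _ => hterm j k
          _ = (d:ℝ) * (2 * (mBV A V x * N)) := by
              rw [Finset.sum_const, Finset.card_univ, Fintype.card_fin, nsmul_eq_mul]
      calc ∑ j, ‖∑ k, (Bmat A j k x • fderiv ℝ (Bmat A j k) x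
            + Bmat A j k x • fderiv ℝ (Bmat A j k) x)‖
          ≤ ∑ _j : Fin d, ((d:ℝ) * (2 * (mBV A V x * N))) := Finset.sum_le_sum fun j _ => hjk j
        _ = (d:ℝ) * ((d:ℝ) * (2 * (mBV A V x * N))) := by
            rw [Finset.sum_const, Finset.card_univ, Fintype.card_fin, nsmul_eq_mul]
        _ = (d:ℝ)^2 * (2 * (mBV A V x * N)) := by ring
    have h1 : ‖(V x).re • (Complex.reCLM.comp (fderiv ℝ V x))‖ ≤ mBV A V x * N := by
      rw [norm_smul_clm]
      exact mul_le_mul hre_abs hre_norm (norm_nonneg _) (le_of_lt hm0)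
    have h2 : ‖(V x).im • (Complex.imCLM.comp (fderiv ℝ V x))‖ ≤ mBV A V x * N := by
      rw [norm_smul_clm]
      exact mul_le_mul him_abs him_norm (norm_nonneg _) (le_of_lt hm0)
    have hT_norm : ‖((V x).re • (Complex.reCLM.comp (fderiv ℝ V x))
          + (V x).re • (Complex.reCLM.comp (fderiv ℝ V x)))
        + ((V x).im • (Complex.imCLM.comp (fderiv ℝ V x))
          + (V x).im • (Complex.imCLM.comp (fderiv ℝ V x)))‖ ≤ 4 * (mBV A V x * N) := by
      refine le_trans (norm_add_le _ _) ?_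
      have ha := le_trans (norm_add_le ((V x).re • (Complex.reCLM.comp (fderiv ℝ V x)))
        ((V x).re • (Complex.reCLM.comp (fderiv ℝ V x)))) (add_le_add h1 h1)
      have hb := le_trans (norm_add_le ((V x).im • (Complex.imCLM.comp (fderiv ℝ V x)))
        ((V x).im • (Complex.imCLM.comp (fderiv ℝ V x)))) (add_le_add h2 h2)
      linarith
    refine le_trans (norm_add_le _ _) (le_trans (add_le_add
      (le_trans (norm_add_le _ _) (add_le_add (le_of_eq norm_zero) hS_norm)) hT_norm) ?_)
    have hmN0 : 0 ≤ mBV A V x * N := mul_nonneg (le_of_lt hm0) (hmN ▸ hN0)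
    nlinarith [sq_nonneg (d:ℝ)]
  -- derivative of mBV with norm bound
  have hN0' : 0 ≤ N := hmN ▸ hN0
  obtain ⟨M', hm', hMn⟩ : ∃ M' : (Fin d → ℝ) →L[ℝ] ℝ, HasFDerivAt (mBV A V) M' x ∧
      ‖M'‖ ≤ ((d:ℝ)^2 + 2) * N := by
    refine ⟨(1 / (2 * mBV A V x)) • G, ?_, ?_⟩
    · have h0 : gBV A V x ≠ 0 := by
        have := gBV_ge_one (A := A) (V := V) x; positivity
      rw [mBV_eq x]
      exact (hg.sqrt h0).congr_of_eventuallyEq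
        (Filter.Eventually.of_forall fun y => mBV_eq y)
    · rw [norm_smul_clm, abs_of_pos (by positivity : (0:ℝ) < 1/(2 * mBV A V x))]
      calc 1/(2 * mBV A V x) * ‖G‖
          ≤ 1/(2 * mBV A V x) * ((2*(d:ℝ)^2 + 4) * mBV A V x * N) :=
            mul_le_mul_of_nonneg_left hGn (by positivity)
        _ = ((d:ℝ)^2 + 2) * N := by field_simp; ring
  -- generic quotient bound
  have hquot : ∀ (f : (Fin d → ℝ) → ℝ) (f' : (Fin d → ℝ) →L[ℝ] ℝ),
      HasFDerivAt f f' x → |f x| ≤ mBV A V x → ‖f'‖ ≤ N →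
      ‖fderiv ℝ (fun y => f y / mBV A V y) x‖ ≤ ((d:ℝ)^2 + 3) * N / mBV A V x := by
    intro f f' hf hfa hfn
    have hinv : HasFDerivAt (fun y => (mBV A V y)⁻¹) ((-((mBV A V x)^2)⁻¹) • M') x :=
      (hasDerivAt_inv (mBV_ne x)).comp_hasFDerivAt x hm'
    have hq : HasFDerivAt (fun y => f y * (mBV A V y)⁻¹)
        (f x • ((-((mBV A V x)^2)⁻¹) • M') + (mBV A V x)⁻¹ • f') x := hf.mul hinv
    have hfun : (fun y => f y / mBV A V y) = fun y => f y * (mBV A V y)⁻¹ := by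
      funext y; rw [div_eq_mul_inv]
    rw [hfun, hq.fderiv]
    have key : ‖f x • ((-((mBV A V x)^2)⁻¹) • M') + (mBV A V x)⁻¹ • f'‖
        ≤ |f x| * ((mBV A V x)^2)⁻¹ * ‖M'‖ + (mBV A V x)⁻¹ * ‖f'‖ := by
      refine le_trans (norm_add_le _ _) (add_le_add ?_ ?_)
      · rw [norm_smul_clm, norm_smul_clm, abs_neg, abs_inv,
          abs_of_pos (by positivity : (0:ℝ) < (mBV A V x)^2)]
        exact le_of_eq (mul_assoc _ _ _).symm
      · rw [norm_smul_clm, abs_inv, abs_of_pos hm0]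
    refine le_trans key ?_
    have h1 : |f x| * ((mBV A V x)^2)⁻¹ * ‖M'‖
        ≤ mBV A V x * ((mBV A V x)^2)⁻¹ * (((d:ℝ)^2 + 2) * N) := by
      apply mul_le_mul _ hMn (norm_nonneg _) (by positivity)
      exact mul_le_mul_of_nonneg_right hfa (by positivity)
    have h2 : (mBV A V x)⁻¹ * ‖f'‖ ≤ (mBV A V x)⁻¹ * N :=
      mul_le_mul_of_nonneg_left hfn (by positivity)
    have h3 : mBV A V x * ((mBV A V x)^2)⁻¹ * (((d:ℝ)^2 + 2) * N) + (mBV A V x)⁻¹ * N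
        = ((d:ℝ)^2 + 3) * N / mBV A V x := by
      field_simp; ring
    linarith
  -- apply to Phi and Psi
  have hPhi : gradPhiSq A V x ≤ (((d:ℝ)^2 + 3) * N / mBV A V x)^2 := by
    have h := hquot (fun y => (V y).im) (Complex.imCLM.comp (fderiv ℝ V x)) him him_abs
      (hmN ▸ him_norm)
    have hfun : PhiW A V = fun y => (V y).im / mBV A V y := rfl
    unfold gradPhiSq
    rw [hfun]
    exact pow_le_pow_left₀ (norm_nonneg _) h 2
  have hPsi : gradPsiSq A V x ≤ (d:ℝ)^2 * (((d:ℝ)^2 + 3) * N / mBV A V x)^2 := by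
    unfold gradPsiSq
    have hterm : ∀ j k : Fin d, ‖fderiv ℝ (fun y => Bmat A j k y / mBV A V y) x‖ ^ 2
        ≤ (((d:ℝ)^2 + 3) * N / mBV A V x)^2 := fun j k =>
      pow_le_pow_left₀ (norm_nonneg _)
        (hquot (Bmat A j k) (fderiv ℝ (Bmat A j k) x) (hBd j k) (hBabs j k) (hBd_norm j k)) 2
    calc ∑ j, ∑ k, ‖fderiv ℝ (fun y => Bmat A j k y / mBV A V y) x‖ ^ 2
        ≤ ∑ _j : Fin d, ∑ _k : Fin d, (((d:ℝ)^2 + 3) * N / mBV A V x)^2 :=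
          Finset.sum_le_sum fun j _ => Finset.sum_le_sum fun k _ => hterm j _
      _ = (d:ℝ)^2 * (((d:ℝ)^2 + 3) * N / mBV A V x)^2 := by
          rw [Finset.sum_const, Finset.sum_const, Finset.card_univ, Fintype.card_fin,
            nsmul_eq_mul, nsmul_eq_mul]
          ring
  nlinarith [sq_nonneg (((d:ℝ)^2 + 3) * N / mBV A V x)]

end Aux2

lemma elem_ineq {D m b vr vi : ℝ} (hD : 1 ≤ D) (hm : 1 ≤ m) (hb : 0 ≤ b)
    (hm2 : m ^ 2 = 1 + b + (vr * vr + vi * vi)) :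
    m / (12 * D) - 1 - 2 * max (-vr) 0 ≤ (vi ^ 2 + b / (12 * D)) / m + vr := by
  have ht0 : (0:ℝ) < 12 * D := by linarith
  have hm0 : (0:ℝ) < m := by linarith
  have habs : |vr| ≤ m := by
    have h1 : vr ^ 2 ≤ m ^ 2 := by nlinarith [mul_self_nonneg vi]
    have h2 := Real.sqrt_le_sqrt h1
    rwa [Real.sqrt_sq_eq_abs, Real.sqrt_sq hm0.le] at h2
  have K1 : (m - 1 - |vr|) / (12 * D) ≤ (vi ^ 2 + b / (12 * D)) / m := by
    rw [div_le_div_iff₀ ht0 hm0]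
    have hbt : b / (12 * D) * (12 * D) = b := div_mul_cancel₀ b (ne_of_gt ht0)
    nlinarith [mul_nonneg (sub_nonneg.2 habs) (abs_nonneg vr), _root_.sq_abs vr, sq_nonneg vi,
      mul_nonneg (sq_nonneg vi) (show (0:ℝ) ≤ 12 * D - 1 by linarith)]
  have K2 : m / (12 * D) - 1 - 2 * max (-vr) 0 ≤ (m - 1 - |vr|) / (12 * D) + vr := by
    have hsplit : (m - 1 - |vr|) / (12 * D) = m / (12 * D) - (1 + |vr|) / (12 * D) := by ring
    have hds : (1 + |vr|) / (12 * D) ≤ 1 + |vr| :=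
      div_le_self (by positivity) (by linarith)
    rw [hsplit]
    rcases le_or_gt 0 vr with h | h
    · rw [_root_.abs_of_nonneg h] at hds ⊢
      have hmax : max (-vr) 0 = 0 := max_eq_right (by linarith)
      rw [hmax]
      linarith
    · rw [_root_.abs_of_neg h] at hds ⊢
      have hmax : max (-vr) 0 = -vr := max_eq_left (by linarith)
      rw [hmax]
      linarith
  linarith

lemma normBsq_nonneg {d : ℕ} (A : (Fin d → ℝ) → (Fin d → ℝ)) (x : Fin d → ℝ) :
    0 ≤ normBsq A x :=
  Finset.sum_nonneg fun j _ => Finset.sum_nonneg fun k _ => sq_nonneg _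

lemma sq_mBV' {d : ℕ} {A : (Fin d → ℝ) → (Fin d → ℝ)} {V : (Fin d → ℝ) → ℂ} (x : Fin d → ℝ) :
    (mBV A V x) ^ 2 = 1 + normBsq A x + ((V x).re * (V x).re + (V x).im * (V x).im) := by
  rw [sq_mBV]
  unfold gBV normBsq
  simp only [pow_two]


/-- Proposition 2.2 (prop.a0): the little-o conditions
`|∇V| + |∇B| = o(m_{B,V}^{3/2})` and `(Re V)₋ = o(m_{B,V})` at infinity imply
Assumption 2.1. -/
theorem stmt4 (d : ℕ) (hd : 0 < d) (Ω : Set (Fin d → ℝ)) (hΩ : IsOpen Ω)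
    (A : (Fin d → ℝ) → (Fin d → ℝ)) (hA : ContDiff ℝ 2 A)
    (V : (Fin d → ℝ) → ℂ) (hV : ContDiff ℝ 1 V)
    (hnabla : ∀ ε > (0 : ℝ), ∃ R : ℝ, ∀ x ∈ Ω, R ≤ ‖x‖ →
      ‖fderiv ℝ V x‖ + Real.sqrt (gradBnormSq A x)
        ≤ ε * (mBV A V x) ^ ((3 : ℝ) / 2))
    (hneg : ∀ ε > (0 : ℝ), ∃ R : ℝ, ∀ x ∈ Ω, R ≤ ‖x‖ →
      max (-(V x).re) 0 ≤ ε * mBV A V x) :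
    ∃ γ₁ : ℝ, 0 < γ₁ ∧ ∃ γ₂ : ℝ, ∀ x ∈ Ω,
      ((V x).im ^ 2 + normBsq A x / (12 * d)) / mBV A V x + (V x).re
          - 9 * (gradPhiSq A V x + gradPsiSq A V x)
        ≥ γ₁ * ‖V x‖ - γ₂ := by

  have hD1 : (1:ℝ) ≤ (d:ℝ) := by exact_mod_cast hd
  have hd0 : (0:ℝ) < (d:ℝ) := by linarith
  obtain ⟨ε, hε0, hε2⟩ : ∃ ε : ℝ, 0 < ε ∧
      9 * ((d:ℝ)^2 + 1) * ((d:ℝ)^2 + 3)^2 * ε^2 = 1 / (48 * (d:ℝ)) := by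
    refine ⟨Real.sqrt (1 / (48 * (d:ℝ) * (9 * ((d:ℝ)^2 + 1) * ((d:ℝ)^2 + 3)^2))),
      Real.sqrt_pos.2 (by positivity), ?_⟩
    rw [Real.sq_sqrt (by positivity)]
    field_simp
  obtain ⟨R₁, hR₁⟩ := hnabla ε hε0
  obtain ⟨R₂, hR₂⟩ := hneg (1 / (96 * (d:ℝ))) (by positivity)
  refine ⟨1 / (24 * (d:ℝ)), by positivity, ?_⟩
  -- continuity of the defect function
  have hVc : Continuous V := hV.continuous
  have c1 : Continuous fun x => (V x).im := Complex.continuous_im.comp hVc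
  have c1' : Continuous fun x => (V x).re := Complex.continuous_re.comp hVc
  have c2 : Continuous (normBsq A) := (contDiff_normBsq hA).continuous
  have c3 : Continuous (mBV A V) := (contDiff_mBV hA hV).continuous
  have c4 : Continuous fun x => gradPhiSq A V x := by
    have him : ContDiff ℝ 1 (fun x => (V x).im) := Complex.imCLM.contDiff.comp hV
    have h := (contDiff_quot hA hV him).continuous_fderiv one_ne_zero
    exact (h.norm.pow 2)
  have c5 : Continuous fun x => gradPsiSq A V x := by
    apply continuous_finset_sum
    intro j _
    apply continuous_finset_sum
    intro k _
    exact (((contDiff_quot hA hV (contDiff_Bmat hA j k)).continuous_fderiv one_ne_zero).norm.pow 2)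
  have hcont : Continuous (fun x => 1 / (24 * (d:ℝ)) * ‖V x‖
      - (((V x).im ^ 2 + normBsq A x / (12 * (d:ℝ))) / mBV A V x + (V x).re
        - 9 * (gradPhiSq A V x + gradPsiSq A V x))) := by
    refine (continuous_const.mul hVc.norm).sub ?_
    refine Continuous.sub ?_ (continuous_const.mul (c4.add c5))
    refine Continuous.add ?_ c1'
    exact ((c1.pow 2).add (c2.div_const _)).div c3 fun x => mBV_ne x
  obtain ⟨C, hC⟩ := (isCompact_closedBall (0 : Fin d → ℝ) (max R₁ R₂)).exists_bound_of_continuousOn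
    hcont.continuousOn
  refine ⟨max C 1, ?_⟩
  intro x hx
  rcases le_or_gt (max R₁ R₂) ‖x‖ with hRx | hRx
  · -- far away : use the hypotheses
    have h1 := hR₁ x hx (le_trans (le_max_left _ _) hRx)
    have h2 := hR₂ x hx (le_trans (le_max_right _ _) hRx)
    have hm1 : 1 ≤ mBV A V x := mBV_ge_one x
    have hm0 : (0:ℝ) < mBV A V x := mBV_pos x
    have hN0 : 0 ≤ ‖fderiv ℝ V x‖ + Real.sqrt (gradBnormSq A x) :=
      add_nonneg (norm_nonneg _) (Real.sqrt_nonneg _)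
    have hVm : ‖V x‖ ≤ mBV A V x := norm_V_le x
    -- elementary part
    have hElem := elem_ineq (D := (d:ℝ)) (m := mBV A V x) (b := normBsq A x)
      (vr := (V x).re) (vi := (V x).im) hD1 hm1 (normBsq_nonneg A x) (sq_mBV' x)
    -- gradient part
    have hgrads := grad_bound hA hV x
    have hpow : (mBV A V x ^ ((3:ℝ)/2))^2 = mBV A V x ^ 3 := by
      rw [← Real.rpow_natCast (mBV A V x ^ ((3:ℝ)/2)) 2, ← Real.rpow_mul hm0.le,
        show ((3:ℝ)/2 * (2:ℕ)) = ((3:ℕ):ℝ) by norm_num, Real.rpow_natCast]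
    have hN2 : (‖fderiv ℝ V x‖ + Real.sqrt (gradBnormSq A x))^2 ≤ ε^2 * (mBV A V x)^3 := by
      have hX0 : (0:ℝ) ≤ mBV A V x ^ ((3:ℝ)/2) := Real.rpow_nonneg hm0.le _
      have h' := mul_le_mul h1 h1 hN0 (by positivity)
      nlinarith [hpow]
    have hfin9 : 9 * (gradPhiSq A V x + gradPsiSq A V x) ≤ mBV A V x / (48 * (d:ℝ)) := by
      have e1 : 9 * (((d:ℝ)^2 + 1) * (((d:ℝ)^2 + 3) *
          (‖fderiv ℝ V x‖ + Real.sqrt (gradBnormSq A x)) / mBV A V x) ^ 2)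
          = 9 * ((d:ℝ)^2 + 1) * ((d:ℝ)^2 + 3)^2
            * (‖fderiv ℝ V x‖ + Real.sqrt (gradBnormSq A x))^2 / (mBV A V x)^2 := by
        ring
      have e2 : 9 * ((d:ℝ)^2 + 1) * ((d:ℝ)^2 + 3)^2
            * (‖fderiv ℝ V x‖ + Real.sqrt (gradBnormSq A x))^2 / (mBV A V x)^2
          ≤ 9 * ((d:ℝ)^2 + 1) * ((d:ℝ)^2 + 3)^2 * (ε^2 * (mBV A V x)^3) / (mBV A V x)^2 := by
        apply div_le_div_of_nonneg_right ?_ (by positivity)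
        · exact mul_le_mul_of_nonneg_left hN2 (by positivity)
      have e3 : 9 * ((d:ℝ)^2 + 1) * ((d:ℝ)^2 + 3)^2 * (ε^2 * (mBV A V x)^3) / (mBV A V x)^2
          = (9 * ((d:ℝ)^2 + 1) * ((d:ℝ)^2 + 3)^2 * ε^2) * mBV A V x := by
        field_simp
      rw [hε2] at e3
      have e4 : (1 / (48 * (d:ℝ))) * mBV A V x = mBV A V x / (48 * (d:ℝ)) := by ring
      linarith [mul_le_mul_of_nonneg_left hgrads (by norm_num : (0:ℝ) ≤ 9)]
    have hfinneg : 2 * max (-(V x).re) 0 ≤ mBV A V x / (48 * (d:ℝ)) := by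
      have : 2 * (1 / (96 * (d:ℝ)) * mBV A V x) = mBV A V x / (48 * (d:ℝ)) := by ring
      linarith
    have e5 : mBV A V x / (12 * (d:ℝ)) - mBV A V x / (48 * (d:ℝ)) - mBV A V x / (48 * (d:ℝ))
        = mBV A V x / (24 * (d:ℝ)) := by
      field_simp
      ring
    have e6 : 1 / (24 * (d:ℝ)) * ‖V x‖ ≤ mBV A V x / (24 * (d:ℝ)) := by
      have := mul_le_mul_of_nonneg_left hVm (by positivity : (0:ℝ) ≤ 1 / (24 * (d:ℝ)))
      linarith [this, (by ring : 1 / (24 * (d:ℝ)) * mBV A V x = mBV A V x / (24 * (d:ℝ)))]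
    have hge1 : (1:ℝ) ≤ max C 1 := le_max_right C 1
    linarith
  · -- inside the ball : use the continuity bound
    have hx' : x ∈ Metric.closedBall (0 : Fin d → ℝ) (max R₁ R₂) :=
      mem_closedBall_zero_iff.2 hRx.le
    have h := hC x hx'
    rw [Real.norm_eq_abs] at h
    have h' := le_trans (le_abs_self _) h
    have hge : C ≤ max C 1 := le_max_left C 1
    linarith
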